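/- arXiv:1408.4074 — 2 statements merged into one kernel-verified Lean document; each statement's English description precedes it below -/
import Mathlib

section
/- If C is a 3-Cayley tree and x, y are nonadjacent edges of C, then the tree C' obtained by the branch shift of x to y is again a 3-Cayley tree with the same set of boundary vertices as C. -/
attribute [local instance] Classical.propDecidable

open SimpleGraph

/-! ### Weighted graphs -/

/-- Total weight `w(A,B)` between two vertex sets. -/
noncomputable def setW {V : Type*} [Fintype V] (w : V → V → ℝ) (A B : Set V) : ℝ :=
  ∑ a ∈ A.toFinset, ∑ b ∈ B.toFinset, w a b

/-- The weight of an undirected edge of the weighted graph. -/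
noncomputable def sym2w {V : Type*} (w : V → V → ℝ) : Sym2 V → ℝ :=
  Sym2.lift ⟨fun a b => (w a b + w b a) / 2, fun a b => by ring⟩

/-! ### 3-Cayley trees and tree positions -/

/-- A boundary (leaf) vertex of a tree. -/
def IsLeaf {W : Type*} (C : SimpleGraph W) (z : W) : Prop := (C.neighborSet z).ncard = 1

/-- A 3-Cayley tree: a tree all of whose vertices have degree 1 (boundary) or 3 (interior). -/
def IsCayley {W : Type*} (C : SimpleGraph W) : Prop :=
  C.IsTree ∧ ∀ z : W, (C.neighborSet z).ncard = 1 ∨ (C.neighborSet z).ncard = 3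

/-- `(C, φ)` is a tree position for a graph with vertex set `V`. -/
def IsTreePosition {V W : Type*} (C : SimpleGraph W) (φ : V → W) : Prop :=
  IsCayley C ∧ Function.Injective φ ∧ Set.range φ = {z | IsLeaf C z}

/-- The edge `f` of `C` lies on a simple path from `a` to `b` (in a tree, THE simple path). -/
def passesThrough {W : Type*} (C : SimpleGraph W) (f : Sym2 W) (a b : W) : Prop :=
  ∃ p : C.Walk a b, p.IsPath ∧ f ∈ p.edges

/-- `R(f)`: the set of edges of the weighted graph that pass through the edge `f` of `C`. -/
def REdges {V W : Type*} (w : V → V → ℝ) (C : SimpleGraph W) (φ : V → W) (f : Sym2 W) :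
    Set (Sym2 V) :=
  {e | ∃ u v : V, e = s(u, v) ∧ w u v ≠ 0 ∧ passesThrough C f (φ u) (φ v)}

/-- The width `b(f)` of an edge `f` of `C`: total weight of the edges of `G` through `f`. -/
noncomputable def bWidth {V W : Type*} [Fintype V] (w : V → V → ℝ) (C : SimpleGraph W)
    (φ : V → W) (f : Sym2 W) : ℝ :=
  ∑ e ∈ (REdges w C φ f).toFinset, sym2w w e

/-- The adjacency weight `a(e,g)`: total weight of edges of `G` through both `e` and `g`. -/
noncomputable def adjW {V W : Type*} [Fintype V] (w : V → V → ℝ) (C : SimpleGraph W)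
    (φ : V → W) (e g : Sym2 W) : ℝ :=
  ∑ e' ∈ (REdges w C φ e ∩ REdges w C φ g).toFinset, sym2w w e'

/-- The slope `s(e,g) = w(R(g) \ R(e)) - w(R(g) ∩ R(e))`. -/
noncomputable def slopeW {V W : Type*} [Fintype V] (w : V → V → ℝ) (C : SimpleGraph W)
    (φ : V → W) (e g : Sym2 W) : ℝ :=
  (∑ e' ∈ (REdges w C φ g \ REdges w C φ e).toFinset, sym2w w e') - adjW w C φ e g

/-- `C(f;g)`: vertex set of the subtree obtained by cutting `f` that contains the edge `g`. -/
def sideWith {W : Type*} (C : SimpleGraph W) (f g : Sym2 W) : Set W :=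
  {z | ∃ a, a ∈ g ∧ (C.deleteEdges {f}).Reachable a z}

/-- `C(f;ḡ)`: vertex set of the subtree obtained by cutting `f` that does not contain `g`. -/
def sideOpp {W : Type*} (C : SimpleGraph W) (f g : Sym2 W) : Set W := (sideWith C f g)ᶜ

/-! ### TILO orderings of a weighted graph -/

/-- `A_t`: the initial segment of an ordering. -/
def ordSet {V : Type*} (o : V → ℕ) (t : ℕ) : Set V := {v | o v ≤ t}

/-- The width `b_t` of an ordering. -/
noncomputable def ordWidth {V : Type*} [Fintype V] (w : V → V → ℝ) (o : V → ℕ) (t : ℕ) : ℝ :=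
  setW w (ordSet o t) (ordSet o t)ᶜ

/-- The slope `s_{t,k}` of an ordering, with `vk` the vertex at position `k`. -/
noncomputable def ordSlope {V : Type*} [Fintype V] (w : V → V → ℝ) (o : V → ℕ) (t : ℕ)
    (vk : V) : ℝ :=
  setW w {vk} ((ordSet o t)ᶜ \ {vk}) - setW w {vk} (ordSet o t \ {vk})

/-- The shift from position `a` to position `b`: compose the ordering with the cyclic
permutation of the block of positions between `a` and `b` sending `a` to `b`. -/
def shiftFun {V : Type*} (a b : ℕ) (o : V → ℕ) : V → ℕ := fun v =>
  if o v = a then b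
  else if a < o v ∧ o v ≤ b then o v - 1
  else if b ≤ o v ∧ o v < a then o v + 1
  else o v

/-- The multiset of widths of an ordering, sorted in nonincreasing order. -/
noncomputable def ordWidthList {V : Type*} [Fintype V] (w : V → V → ℝ) (N : ℕ)
    (o : V → ℕ) : List ℝ :=
  ((List.range N).map (ordWidth w o)).insertionSort (· ≥ ·)

/-- Strict lexicographic comparison of sorted width lists. -/
def lexLess (l₁ l₂ : List ℝ) : Prop := List.Lex (· < ·) l₁ l₂

/-- A TILO ordering is weakly reducible when some shift strictly decreases its width. -/
def OrdWeaklyReducible {V : Type*} [Fintype V] (w : V → V → ℝ) (N : ℕ) (o : V → ℕ) : Prop :=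
  ∃ a b : ℕ, a < N ∧ b < N ∧ a ≠ b ∧
    lexLess (ordWidthList w N (shiftFun a b o)) (ordWidthList w N o)

/-! ### Branch shift data -/

/-- The data of a pair of nonadjacent edges `x`, `y` of a tree `C` together with the unique
simple path `p 1, …, p i` from `x` to `y`, the extremal third edges `p 0` (at the common
endpoint of `x` and `p 1`, other endpoint `fv`) and `p (i+1)` (at the common endpoint of `y`
and `p i`, other endpoint `gv`), and the third edges `fE t` at the common endpoint of
`p (t-1)` and `p t` for `2 ≤ t ≤ i`.  The path visits the vertices
`x0, vs 0, vs 1, …, vs i, y1` where `x = s(x0, vs 0)` and `y = s(vs i, y1)`. -/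
structure BranchData {W : Type*} (C : SimpleGraph W) (x y : Sym2 W) where
  i : ℕ
  hi1 : 1 ≤ i
  vs : ℕ → W
  x0 : W
  y1 : W
  fv : W
  gv : W
  p : ℕ → Sym2 W
  fE : ℕ → Sym2 W
  hx : x ∈ C.edgeSet
  hy : y ∈ C.edgeSet
  hnonadj : ∀ z : W, ¬(z ∈ x ∧ z ∈ y)
  hxe : x = s(x0, vs 0)
  hye : y = s(vs i, y1)
  hpe : ∀ t, 1 ≤ t → t ≤ i → p t = s(vs (t - 1), vs t)
  hpedge : ∀ t, 1 ≤ t → t ≤ i → p t ∈ C.edgeSet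
  hvsinj : ∀ t t', t ≤ i → t' ≤ i → vs t = vs t' → t = t'
  hx0 : ∀ t, t ≤ i → x0 ≠ vs t
  hy1 : ∀ t, t ≤ i → y1 ≠ vs t
  hp0 : p 0 = s(vs 0, fv)
  hp0edge : p 0 ∈ C.edgeSet
  hp0x : p 0 ≠ x
  hp0p1 : p 0 ≠ p 1
  hpi1 : p (i + 1) = s(vs i, gv)
  hpi1edge : p (i + 1) ∈ C.edgeSet
  hpi1y : p (i + 1) ≠ y
  hpi1pi : p (i + 1) ≠ p i
  hfE : ∀ t, 2 ≤ t → t ≤ i →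
    fE t ∈ C.edgeSet ∧ vs (t - 1) ∈ fE t ∧ fE t ≠ p (t - 1) ∧ fE t ≠ p t

/-- The parts `P 0, …, P (i+2)` of the partition of the vertices of `G` induced by the
branch shift data. -/
def BranchData.part {V W : Type*} {C : SimpleGraph W} {x y : Sym2 W}
    (d : BranchData C x y) (φ : V → W) : ℕ → Set V := fun t =>
  if t = 0 then φ ⁻¹' (sideOpp C (d.p 0) y)
  else if t = 1 then φ ⁻¹' (sideOpp C x y)
  else if t ≤ d.i then φ ⁻¹' (sideOpp C (d.fE t) y)
  else if t = d.i + 1 then φ ⁻¹' (sideOpp C y x)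
  else φ ⁻¹' (sideOpp C (d.p (d.i + 1)) y)

/-- The tree `C'` obtained by the branch shift of `x` to `y`: detach `e = p 1` from
`v = vs 1` and reattach it at `s = vs i`, reattach the third edge `p 0` at `u = vs 0` to
`v = vs 1`, and reattach the third edge `p (i+1)` at `s = vs i` to `u = vs 0`. -/
def BranchData.shifted {W : Type*} {C : SimpleGraph W} {x y : Sym2 W}
    (d : BranchData C x y) : SimpleGraph W :=
  SimpleGraph.fromEdgeSet
    ((C.edgeSet \ {d.p 1, d.p 0, d.p (d.i + 1)}) ∪
      {s(d.vs 0, d.vs d.i), s(d.vs 1, d.fv), s(d.vs 0, d.gv)})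

/-- The weight function of the branch shift quotient graph `Q`: vertex `u_j` corresponds to
the part `P j`, and the weight of the edge `(u_j, u_l)` is `w(P j, P l)`. -/
noncomputable def BranchData.qw {V W : Type*} [Fintype V] {C : SimpleGraph W} {x y : Sym2 W}
    (d : BranchData C x y) (w : V → V → ℝ) (φ : V → W) :
    Fin (d.i + 3) → Fin (d.i + 3) → ℝ :=
  fun j l => if j = l then 0 else setW w (d.part φ j) (d.part φ l)

/-- The multiset of widths of the edges of a tree position, sorted in nonincreasing order. -/
noncomputable def treeWidthList {V W : Type*} [Fintype V] [Fintype W] (w : V → V → ℝ)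
    (C : SimpleGraph W) (φ : V → W) : List ℝ :=
  ((C.edgeSet.toFinset.val.map (bWidth w C φ)).toList).insertionSort (· ≥ ·)

/-- A tree position is weakly reducible when some branch shift strictly decreases its
width; otherwise it is strongly irreducible (thin). -/
def TPWeaklyReducible {V W : Type*} [Fintype V] [Fintype W] (w : V → V → ℝ)
    (C : SimpleGraph W) (φ : V → W) : Prop :=
  ∃ (x y : Sym2 W) (d : BranchData C x y),
    lexLess (treeWidthList w d.shifted φ) (treeWidthList w C φ)

/-! ### Pinch clusters -/

/-- The boundary weight of a set of vertices. -/
noncomputable def boundaryW {V : Type*} [Fintype V] (w : V → V → ℝ) (A : Set V) : ℝ :=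
  setW w A Aᶜ

/-- `A` is a pinch cluster: whenever adding the vertices `v 1, …, v m` to `A` (resp. removing
them from `A`) produces a set with strictly smaller boundary, some proper initial segment
`v 1, …, v k` added (resp. removed) produces a set with strictly larger boundary. -/
def IsPinchCluster {V : Type*} [Fintype V] (w : V → V → ℝ) (A : Set V) : Prop :=
  ∀ (m : ℕ) (v : ℕ → V),
    (boundaryW w (A ∪ v '' Set.Icc 1 m) < boundaryW w A →
      ∃ k, 1 ≤ k ∧ k < m ∧ boundaryW w A < boundaryW w (A ∪ v '' Set.Icc 1 k)) ∧
    (boundaryW w (A \ v '' Set.Icc 1 m) < boundaryW w A →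
      ∃ k, 1 ≤ k ∧ k < m ∧ boundaryW w A < boundaryW w (A \ v '' Set.Icc 1 k))

/-- `e` is a local minimum of the tree position: each endpoint of `e` is shared with an edge
of strictly greater width whose second endpoint is not a boundary vertex. -/
def IsLocalMinEdge {V W : Type*} [Fintype V] (w : V → V → ℝ) (C : SimpleGraph W)
    (φ : V → W) (e : Sym2 W) : Prop :=
  ∀ z ∈ e, ∃ f ∈ C.edgeSet, z ∈ f ∧ f ≠ e ∧
    bWidth w C φ e < bWidth w C φ f ∧ ∀ z' ∈ f, z' ≠ z → ¬ IsLeaf C z'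


/-!
Write `u = vs 0`, `v = vs 1`, `s = vs i`. The branch shift removes the edges `uv`, `u fv`,
`s gv` of `C` and adds `us`, `v fv`, `u gv`. Both triples have the endpoint multiset
`{u, u, v, s, fv, gv}`, so every vertex keeps its degree and the number of edges is unchanged.
In the tree `C` each added edge would close a cycle (with the path `u, v, …, s`), so it is new
unless `i = 1`, where `us` is the removed edge `uv` itself. The new graph is connected, since
the endpoints of each removed edge are still joined through the path `v, …, s` and the added
edges; a connected graph with as many edges as a tree on the same vertices is a tree.
-/

theorem Set.ncard_sdiff_union_inter {α : Type*} {E D A S : Set α} (hE : E.Finite) (hA : A.Finite)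
    (hD : D ⊆ E) (hEA : Disjoint (E \ D) A) (h : (D ∩ S).ncard = (A ∩ S).ncard) :
    ((E \ D ∪ A) ∩ S).ncard = (E ∩ S).ncard := by
  have hsplit : (E \ D ∪ A) ∩ S = (E ∩ S) \ (D ∩ S) ∪ A ∩ S := by
    ext e
    simp only [Set.mem_inter_iff, Set.mem_union, Set.mem_sdiff]
    tauto
  have hES : (E ∩ S).Finite := hE.inter_of_left S
  have hsub : (E ∩ S) \ (D ∩ S) ⊆ E \ D := fun e he => ⟨he.1.1, fun hd => he.2 ⟨hd, he.1.2⟩⟩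
  rw [hsplit, Set.ncard_union_eq (hEA.mono hsub Set.inter_subset_left) hES.sdiff
      (hA.inter_of_left S), ← h,
    Set.ncard_sdiff_add_ncard_of_subset (Set.inter_subset_inter_left S hD) hES]

theorem Set.ncard_triple_inter {α : Type*} {a b c : α} (hab : a ≠ b) (hac : a ≠ c) (hbc : b ≠ c)
    (S : Set α) :
    (({a, b, c} : Set α) ∩ S).ncard = S.indicator 1 a + S.indicator 1 b + S.indicator 1 c := by
  classical
  have : ({a, b, c} : Set α) ∩ S = ↑(({a, b, c} : Finset α).filter (· ∈ S)) := by
    ext; simp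
  rw [this, Set.ncard_coe_finset, Finset.card_filter, Finset.sum_insert (by simp [hab, hac]),
    Finset.sum_insert (by simp [hbc]), Finset.sum_singleton, add_assoc]
  simp only [Set.indicator_apply, Pi.one_apply]

theorem Sym2.indicator_incident_mk {α : Type*} {a b : α} (hab : a ≠ b) (z : α) :
    {e : Sym2 α | z ∈ e}.indicator (1 : Sym2 α → ℕ) s(a, b) =
      ({a} : Set α).indicator 1 z + ({b} : Set α).indicator 1 z := by
  by_cases ha : z = a <;> by_cases hb : z = b <;> simp_all

theorem Sym2.mk_ne_mk_of_left {α : Type*} {a b c d : α} (hc : a ≠ c) (hd : a ≠ d) :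
    s(a, b) ≠ s(c, d) := fun h => by
  have := Sym2.mem_mk_left a b
  rw [h, Sym2.mem_iff] at this
  tauto

theorem Sym2.mk_ne_mk_of_right {α : Type*} {a b c d : α} (hc : b ≠ c) (hd : b ≠ d) :
    s(a, b) ≠ s(c, d) := by
  rw [Sym2.eq_swap]
  exact Sym2.mk_ne_mk_of_left hc hd

namespace SimpleGraph

variable {V : Type*}

theorem IsAcyclic.not_adj_of_isPath {G : SimpleGraph V} (hG : G.IsAcyclic) {a b : V}
    {q : G.Walk a b} (hq : q.IsPath) (hlen : 2 ≤ q.length) : ¬G.Adj a b := fun h => by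
  have := congrArg (fun p : G.Path a b => p.1.length)
    ((hG.subsingleton_path a b).elim ⟨q, hq⟩ (Path.singleton h))
  simp only [Path.singleton_coe, Walk.length_cons, Walk.length_nil] at this
  omega

theorem Connected.of_adj_reachable {G H : SimpleGraph V} (hG : G.Connected)
    (h : ∀ ⦃a b⦄, G.Adj a b → H.Reachable a b) : H.Connected := by
  have hle : G.Reachable ≤ H.Reachable := by
    rw [reachable_eq_reflTransGen, reachable_eq_reflTransGen]
    exact Relation.reflTransGen_closed fun a b hab => by
      rw [← reachable_eq_reflTransGen]; exact h hab
  exact (connected_iff _).mpr ⟨fun a b => hle a b (hG.preconnected a b), hG.nonempty⟩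

theorem ncard_neighborSet_eq_ncard_incidenceSet (G : SimpleGraph V) (v : V) :
    (G.neighborSet v).ncard = (G.incidenceSet v).ncard := by
  rw [← Nat.card_coe_set_eq, ← Nat.card_coe_set_eq,
    Nat.card_congr (G.incidenceSetEquivNeighborSet v)]

theorem IsTree.of_connected_of_ncard_edgeSet [Finite V] {G H : SimpleGraph V} (hG : G.IsTree)
    (hH : H.Connected) (h : H.edgeSet.ncard = G.edgeSet.ncard) : H.IsTree := by
  rw [isTree_iff_connected_and_card] at hG ⊢
  rw [Nat.card_coe_set_eq, h, ← Nat.card_coe_set_eq]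
  exact ⟨hH, hG.2⟩

section Exchange

variable {G : SimpleGraph V} {D A : Set (Sym2 V)}

theorem edgeSet_fromEdgeSet_sdiff_union (hA : ∀ e ∈ A, ¬e.IsDiag) :
    (fromEdgeSet (G.edgeSet \ D ∪ A)).edgeSet = G.edgeSet \ D ∪ A := by
  refine (edgeSet_fromEdgeSet _).trans (sdiff_eq_left.mpr (Set.disjoint_left.mpr ?_))
  rintro e (he | he) hdiag
  · exact G.not_isDiag_of_mem_edgeSet he.1 hdiag
  · exact hA e he hdiag

variable [Finite V] (hD : D ⊆ G.edgeSet) (hA : ∀ e ∈ A, ¬e.IsDiag)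
  (hGA : Disjoint (G.edgeSet \ D) A)
include hD hA hGA

theorem ncard_edgeSet_fromEdgeSet_sdiff_union (h : D.ncard = A.ncard) :
    (fromEdgeSet (G.edgeSet \ D ∪ A)).edgeSet.ncard = G.edgeSet.ncard := by
  rw [edgeSet_fromEdgeSet_sdiff_union hA]
  simpa using Set.ncard_sdiff_union_inter (S := Set.univ) (Set.toFinite _) (Set.toFinite A) hD
    hGA (by simpa using h)

theorem ncard_neighborSet_fromEdgeSet_sdiff_union
    (h : ∀ z, (D ∩ {e | z ∈ e}).ncard = (A ∩ {e | z ∈ e}).ncard) (z : V) :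
    ((fromEdgeSet (G.edgeSet \ D ∪ A)).neighborSet z).ncard = (G.neighborSet z).ncard := by
  rw [ncard_neighborSet_eq_ncard_incidenceSet, ncard_neighborSet_eq_ncard_incidenceSet]
  change (_ ∩ {e | z ∈ e}).ncard = (G.edgeSet ∩ {e | z ∈ e}).ncard
  rw [edgeSet_fromEdgeSet_sdiff_union hA]
  exact Set.ncard_sdiff_union_inter (Set.toFinite _) (Set.toFinite A) hD hGA (h z)

end Exchange

end SimpleGraph

namespace BranchData

variable {W : Type*} {C : SimpleGraph W} {x y : Sym2 W} (d : BranchData C x y)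

theorem p_one : d.p 1 = s(d.vs 0, d.vs 1) := by simpa using d.hpe 1 le_rfl d.hi1

theorem adj_succ {t : ℕ} (ht : t < d.i) : C.Adj (d.vs t) (d.vs (t + 1)) := by
  simpa [d.hpe (t + 1) (by omega) ht] using d.hpedge (t + 1) (by omega) ht

theorem adj_fv : C.Adj (d.vs 0) d.fv := by simpa [d.hp0] using d.hp0edge

theorem adj_gv : C.Adj (d.vs d.i) d.gv := by simpa [d.hpi1] using d.hpi1edge

theorem vs_ne {t t' : ℕ} (ht : t ≤ d.i) (ht' : t' ≤ d.i) (h : t ≠ t') : d.vs t ≠ d.vs t' :=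
  fun heq => h (d.hvsinj t t' ht ht' heq)

theorem vs_zero_ne_vs_one : d.vs 0 ≠ d.vs 1 := d.vs_ne (Nat.zero_le _) d.hi1 Nat.zero_ne_one

theorem vs_zero_ne_vs_i : d.vs 0 ≠ d.vs d.i :=
  d.vs_ne (Nat.zero_le _) le_rfl (Nat.pos_iff_ne_zero.mp d.hi1).symm

theorem exists_isPath {a b : ℕ} (hab : a ≤ b) (hb : b ≤ d.i) :
    ∃ q : C.Walk (d.vs a) (d.vs b), q.IsPath ∧ q.length = b - a ∧
      ∀ z ∈ q.support, ∃ t ≤ b, z = d.vs t := by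
  induction b, hab using Nat.le_induction with
  | base => exact ⟨.nil, .nil, by simp, fun z hz => ⟨a, le_rfl, by simpa using hz⟩⟩
  | succ b hab ih =>
    obtain ⟨q, hq, hlen, hsupp⟩ := ih (by omega)
    have hnew : d.vs (b + 1) ∉ q.support := fun hmem => by
      obtain ⟨t, ht, heq⟩ := hsupp _ hmem
      have := d.hvsinj _ _ hb (by omega) heq
      omega
    refine ⟨q.concat (d.adj_succ (by omega)), hq.concat hnew _,
      by rw [SimpleGraph.Walk.length_concat]; omega, fun z hz => ?_⟩
    rw [SimpleGraph.Walk.support_concat, List.mem_append, List.mem_singleton] at hz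
    rcases hz with hz | rfl
    · obtain ⟨t, ht, rfl⟩ := hsupp z hz
      exact ⟨t, by omega, rfl⟩
    · exact ⟨b + 1, le_rfl, rfl⟩

def removedEdges : Set (Sym2 W) := {d.p 1, d.p 0, d.p (d.i + 1)}

def addedEdges : Set (Sym2 W) := {s(d.vs 0, d.vs d.i), s(d.vs 1, d.fv), s(d.vs 0, d.gv)}

theorem shifted_eq : d.shifted = fromEdgeSet (C.edgeSet \ d.removedEdges ∪ d.addedEdges) := rfl

theorem removedEdges_subset : d.removedEdges ⊆ C.edgeSet := by
  rintro e (rfl | rfl | rfl)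
  exacts [d.hpedge 1 le_rfl d.hi1, d.hp0edge, d.hpi1edge]

variable (hC : C.IsAcyclic)
include hC

theorem not_adj_vs {s t : ℕ} (hst : s + 2 ≤ t) (ht : t ≤ d.i) : ¬C.Adj (d.vs s) (d.vs t) := by
  obtain ⟨q, hq, hlen, -⟩ := d.exists_isPath (by omega : s ≤ t) ht
  exact hC.not_adj_of_isPath hq (by omega)

theorem fv_ne_vs {t : ℕ} (ht : t ≤ d.i) : d.fv ≠ d.vs t := by
  intro heq
  match t, ht, heq with
  | 0, _, heq => exact d.adj_fv.ne heq.symm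
  | 1, _, heq => exact d.hp0p1 (by rw [d.hp0, d.p_one, heq])
  | t + 2, ht, heq => exact d.not_adj_vs hC (by omega) ht (heq ▸ d.adj_fv)

theorem gv_ne_vs {t : ℕ} (ht : t ≤ d.i) : d.gv ≠ d.vs t := by
  intro heq
  obtain hlt | hi | rfl : t + 2 ≤ d.i ∨ d.i = t + 1 ∨ t = d.i := by omega
  · exact d.not_adj_vs hC hlt le_rfl (heq ▸ d.adj_gv).symm
  · refine d.hpi1pi ?_
    rw [d.hpi1, d.hpe d.i d.hi1 le_rfl, heq, hi, Sym2.eq_swap]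
    simp
  · exact d.adj_gv.ne heq.symm

theorem not_adj_vs_one_fv : ¬C.Adj (d.vs 1) d.fv := by
  have h01 := d.vs_zero_ne_vs_one
  have hf0 := d.fv_ne_vs hC (Nat.zero_le _)
  have hf1 := d.fv_ne_vs hC d.hi1
  let q : C.Walk (d.vs 1) d.fv := .cons (d.adj_succ d.hi1).symm (.cons d.adj_fv .nil)
  refine hC.not_adj_of_isPath (q := q) ?_ (by simp [q])
  simpa [q] using ⟨hf0.symm, h01.symm, hf1.symm⟩

theorem not_adj_vs_zero_gv : ¬C.Adj (d.vs 0) d.gv := by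
  obtain ⟨q, hq, hlen, hsupp⟩ := d.exists_isPath (Nat.zero_le d.i) le_rfl
  have hgv : d.gv ∉ q.support := fun hmem => by
    obtain ⟨t, ht, heq⟩ := hsupp _ hmem
    exact d.gv_ne_vs hC ht heq
  exact hC.not_adj_of_isPath (hq.concat hgv d.adj_gv)
    (by rw [SimpleGraph.Walk.length_concat]; have := d.hi1; omega)

theorem not_isDiag_of_mem_addedEdges : ∀ e ∈ d.addedEdges, ¬e.IsDiag := by
  rintro e (rfl | rfl | rfl) <;> rw [Sym2.mk_isDiag_iff]
  exacts [d.vs_zero_ne_vs_i, (d.fv_ne_vs hC d.hi1).symm, (d.gv_ne_vs hC (Nat.zero_le _)).symm]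

theorem disjoint_addedEdges : Disjoint (C.edgeSet \ d.removedEdges) d.addedEdges := by
  refine Set.disjoint_right.mpr ?_
  rintro e (rfl | rfl | rfl) ⟨he, hnot⟩
  · obtain hi | hi : d.i = 1 ∨ 2 ≤ d.i := by have := d.hi1; omega
    · exact hnot (Or.inl (by rw [d.p_one, hi]))
    · exact d.not_adj_vs hC (by omega) le_rfl he
  · exact d.not_adj_vs_one_fv hC he
  · exact d.not_adj_vs_zero_gv hC he

theorem ncard_removedEdges_inter (S : Set (Sym2 W)) :
    (d.removedEdges ∩ S).ncard = S.indicator 1 s(d.vs 0, d.vs 1) +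
      S.indicator 1 s(d.vs 0, d.fv) + S.indicator 1 s(d.vs d.i, d.gv) := by
  have hne : ∀ {w}, s(d.vs 0, w) ≠ d.p (d.i + 1) := by
    rw [d.hpi1]
    exact Sym2.mk_ne_mk_of_left d.vs_zero_ne_vs_i (d.gv_ne_vs hC (Nat.zero_le _)).symm
  rw [removedEdges, Set.ncard_triple_inter d.hp0p1.symm (d.p_one ▸ hne) (d.hp0 ▸ hne), d.p_one,
    d.hp0, d.hpi1]

theorem ncard_addedEdges_inter (S : Set (Sym2 W)) :
    (d.addedEdges ∩ S).ncard = S.indicator 1 s(d.vs 0, d.vs d.i) +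
      S.indicator 1 s(d.vs 1, d.fv) + S.indicator 1 s(d.vs 0, d.gv) := by
  have h01 := d.vs_zero_ne_vs_one
  have hf0 := d.fv_ne_vs hC (Nat.zero_le _)
  have hg1 := d.gv_ne_vs hC d.hi1
  have hgi := d.gv_ne_vs hC le_rfl
  refine Set.ncard_triple_inter (Sym2.mk_ne_mk_of_left h01 hf0.symm) ?_
    (Sym2.mk_ne_mk_of_left h01.symm hg1.symm) S
  exact Sym2.mk_ne_mk_of_right d.vs_zero_ne_vs_i.symm hgi.symm

theorem ncard_removedEdges_eq_ncard_addedEdges : d.removedEdges.ncard = d.addedEdges.ncard := by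
  simpa using (d.ncard_removedEdges_inter hC Set.univ).trans
    (d.ncard_addedEdges_inter hC Set.univ).symm

theorem ncard_removedEdges_inter_incident_eq (z : W) :
    (d.removedEdges ∩ {e | z ∈ e}).ncard = (d.addedEdges ∩ {e | z ∈ e}).ncard := by
  rw [d.ncard_removedEdges_inter hC, d.ncard_addedEdges_inter hC]
  have hf0 := d.fv_ne_vs hC (Nat.zero_le _)
  have hf1 := d.fv_ne_vs hC d.hi1
  have hg0 := d.gv_ne_vs hC (Nat.zero_le _)
  have hgi := d.gv_ne_vs hC le_rfl
  rw [Sym2.indicator_incident_mk d.vs_zero_ne_vs_one, Sym2.indicator_incident_mk hf0.symm,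
    Sym2.indicator_incident_mk hgi.symm, Sym2.indicator_incident_mk d.vs_zero_ne_vs_i,
    Sym2.indicator_incident_mk hf1.symm, Sym2.indicator_incident_mk hg0.symm]
  omega

theorem connected_shifted (hconn : C.Connected) : d.shifted.Connected := by
  have hadded : ∀ {a b}, s(a, b) ∈ d.addedEdges → d.shifted.Adj a b := fun he => by
    rw [shifted_eq, fromEdgeSet_adj]
    exact ⟨Or.inr he, fun hab => d.not_isDiag_of_mem_addedEdges hC _ he (by simpa)⟩
  have hkept : ∀ {a b}, C.Adj a b → s(a, b) ∉ d.removedEdges → d.shifted.Adj a b :=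
    fun hab he => by
      rw [shifted_eq, fromEdgeSet_adj]
      exact ⟨Or.inl ⟨hab, he⟩, hab.ne⟩
  have hpath : ∀ t, 1 ≤ t → t ≤ d.i → d.shifted.Reachable (d.vs 1) (d.vs t) := by
    intro t ht
    induction t, ht using Nat.le_induction with
    | base => exact fun _ => .rfl
    | succ t ht ih =>
      intro hti
      refine (ih (by omega)).trans (hkept (d.adj_succ (by omega)) ?_).reachable
      rintro (he | he | he)
      · rw [d.p_one] at he
        exact Sym2.mk_ne_mk_of_right (d.vs_ne hti (Nat.zero_le _) (by omega))
          (d.vs_ne hti d.hi1 (by omega)) he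
      · rw [d.hp0] at he
        exact Sym2.mk_ne_mk_of_right (d.vs_ne hti (Nat.zero_le _) (by omega))
          (d.fv_ne_vs hC hti).symm he
      · rw [d.hpi1] at he
        exact Sym2.mk_ne_mk_of_left (d.vs_ne (by omega) le_rfl (by omega))
          (d.gv_ne_vs hC (by omega)).symm he
  have h0i : d.shifted.Reachable (d.vs 0) (d.vs d.i) := (hadded (Or.inl rfl)).reachable
  have h01 : d.shifted.Reachable (d.vs 0) (d.vs 1) := h0i.trans (hpath d.i d.hi1 le_rfl).symm
  have h0f : d.shifted.Reachable (d.vs 0) d.fv :=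
    h01.trans (hadded (Or.inr (Or.inl rfl))).reachable
  have hig : d.shifted.Reachable (d.vs d.i) d.gv :=
    h0i.symm.trans (hadded (Or.inr (Or.inr rfl))).reachable
  have of_eq : ∀ {a b u v}, s(a, b) = s(u, v) → d.shifted.Reachable u v →
      d.shifted.Reachable a b := by
    rintro a b u v h huv
    rcases Sym2.eq_iff.mp h with ⟨rfl, rfl⟩ | ⟨rfl, rfl⟩
    exacts [huv, huv.symm]
  refine hconn.of_adj_reachable fun a b hab => ?_
  by_cases hr : s(a, b) ∈ d.removedEdges
  · rcases hr with he | he | he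
    · exact of_eq (he.trans d.p_one) h01
    · exact of_eq (he.trans d.hp0) h0f
    · exact of_eq (he.trans d.hpi1) hig
  · exact (hkept hab hr).reachable

end BranchData

/-- If `C` is a 3-Cayley tree and `x`, `y` are nonadjacent edges of `C`,
then the tree `C'` obtained by the branch shift of `x` to `y` is again a 3-Cayley tree with
the same set of boundary vertices as `C`. -/
theorem branch_shift_cayley {W : Type*} [Fintype W] (C : SimpleGraph W)
    (hC : IsCayley C) (x y : Sym2 W) (d : BranchData C x y) :
    IsCayley d.shifted ∧ ∀ z : W, IsLeaf d.shifted z ↔ IsLeaf C z := by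
  obtain ⟨hT, hdeg⟩ := hC
  have hA := d.not_isDiag_of_mem_addedEdges hT.isAcyclic
  have hdisj := d.disjoint_addedEdges hT.isAcyclic
  have hnbr : ∀ z, (d.shifted.neighborSet z).ncard = (C.neighborSet z).ncard :=
    ncard_neighborSet_fromEdgeSet_sdiff_union d.removedEdges_subset hA hdisj
      (d.ncard_removedEdges_inter_incident_eq hT.isAcyclic)
  have htree : d.shifted.IsTree :=
    hT.of_connected_of_ncard_edgeSet (d.connected_shifted hT.isAcyclic hT.connected)
      (ncard_edgeSet_fromEdgeSet_sdiff_union d.removedEdges_subset hA hdisj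
        (d.ncard_removedEdges_eq_ncard_addedEdges hT.isAcyclic))
  refine ⟨⟨htree, fun z => hnbr z ▸ hdeg z⟩, fun z => ?_⟩
  rw [IsLeaf, IsLeaf, hnbr z]
end

section
/- Let (C',φ) be the branch shift of x to y applied to a tree position (C,φ) of G, and let Q be the common branch shift quotient graph (so that Q' = Q with the part identifications P_0' = P_0, P_{i+2}' = P_{i+2}, P_{i+1}' = P_1, P_t' = P_{t+1} for 1 ≤ t ≤ i). Then the identity-map TILO ordering on Q defined by (C',φ) is the result of starting with the identity-map TILO ordering defined by (C,φ) and cyclically shifting the vertex at position 1 to position i+1; that is, the ordering (u_0, u_1, …, u_{i+2}) is replaced by (u_0, u_2, u_3, …, u_i, u_{i+1}, u_1, u_{i+2}). -/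
/-!
The branch shift replaces the edges `p 1 = s(vs 0, vs 1)`, `p 0 = s(vs 0, fv)` and
`p (i+1) = s(vs i, gv)` of `C` by `s(vs 0, vs i)`, `s(vs 1, fv)` and `s(vs 0, gv)`. Each edge
removed from `C` can be bypassed in `C'` and vice versa, so cutting an edge of `C` that has an
endpoint off the path `vs 0, …, vs i` leaves the same components in `C` and in `C'`; likewise,
cutting `s(vs 1, fv)` (resp. `s(vs 0, gv)`) from `C'` leaves the components of `C` cut at `p 0`
(resp. `p (i+1)`).

The branch data `d'` of `C'` from `fE 2` to `x` is forced: every vertex of `C` has at most three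
neighbours and every edge of a tree is a bridge, so the path of `d'` is `vs 1, …, vs i, vs 0` and
its third edges are `s(vs 1, fv)`, `fE 3, …, fE i`, `y` and `s(vs 0, gv)`. Comparing the
corresponding cuts part by part gives the cyclic shift of the ordering.
-/

attribute [local instance] Classical.propDecidable

open SimpleGraph

namespace SimpleGraph

variable {W : Type*} {G H : SimpleGraph W}

theorem Reachable.of_forall_adj (h : ∀ a b, G.Adj a b → H.Reachable a b) {a b : W}
    (hab : G.Reachable a b) : H.Reachable a b := by
  rw [reachable_iff_reflTransGen] at hab ⊢
  exact Relation.ReflTransGen.lift' id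
    (fun a b hab => (reachable_iff_reflTransGen a b).1 (h a b hab)) a b hab

theorem reachable_iff_of_forall_adj (hGH : ∀ a b, G.Adj a b → H.Reachable a b)
    (hHG : ∀ a b, H.Adj a b → G.Reachable a b) (a b : W) :
    G.Reachable a b ↔ H.Reachable a b :=
  ⟨.of_forall_adj hGH, .of_forall_adj hHG⟩

theorem reachable_of_mk_eq {a b c d : W} (h : s(a, b) = s(c, d)) (hcd : G.Reachable c d) :
    G.Reachable a b := by
  rcases Sym2.eq_iff.1 h with ⟨rfl, rfl⟩ | ⟨rfl, rfl⟩
  exacts [hcd, hcd.symm]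

theorem reachable_of_forall_adj_pred (v : ℕ → W) {a b : ℕ} (hab : a ≤ b)
    (h : ∀ t, a < t → t ≤ b → G.Adj (v (t - 1)) (v t)) : G.Reachable (v a) (v b) := by
  induction b, hab using Nat.le_induction with
  | base => rfl
  | succ b hab ih =>
    exact (ih fun t ht htb => h t ht (by omega)).trans (h (b + 1) (by omega) le_rfl).reachable

theorem deleteEdges_adj_of_ne {e : Sym2 W} {a b : W} (h : G.Adj a b) (he : s(a, b) ≠ e) :
    (G.deleteEdges {e}).Adj a b :=
  deleteEdges_adj.2 ⟨h, he⟩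

theorem reachable_deleteEdges_of_mem {g g' e : Sym2 W} (hg : g ∈ G.edgeSet)
    (hg' : g' ∈ G.edgeSet) (hge : g ≠ e) (hg'e : g' ≠ e) {u v : W} (hu : u ∈ g) (hv : v ∈ g')
    (huv : (G.deleteEdges {e}).Reachable u v) :
    ∀ a ∈ g, ∀ b ∈ g', (G.deleteEdges {e}).Reachable a b := by
  have hends : ∀ f ∈ G.edgeSet, f ≠ e → ∀ a ∈ f, ∀ b ∈ f, (G.deleteEdges {e}).Reachable a b := by
    intro f hf hfe a ha b hb
    induction f using Sym2.ind with
    | h c d =>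
      have hcd : (G.deleteEdges {e}).Reachable c d :=
        (deleteEdges_adj_of_ne (G.mem_edgeSet.1 hf) hfe).reachable
      rcases Sym2.mem_iff.1 ha with rfl | rfl <;> rcases Sym2.mem_iff.1 hb with rfl | rfl
      exacts [.rfl, hcd, hcd.symm, .rfl]
  intro a ha b hb
  exact ((hends g hg hge a ha u hu).trans huv).trans (hends g' hg' hg'e v hv b hb)

namespace IsAcyclic

theorem not_reachable_deleteEdges (hG : G.IsAcyclic) {a b : W} (h : G.Adj a b) :
    ¬ (G.deleteEdges {s(a, b)}).Reachable a b :=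
  isBridge_iff.1 (isAcyclic_iff_forall_adj_isBridge.1 hG h)

theorem eq_of_reachable_deleteEdges (hG : G.IsAcyclic) {a b c d : W} (h : G.Adj a b)
    {e : Sym2 W} (hab : e = s(a, b)) (hcd : e = s(c, d)) (hc : (G.deleteEdges {e}).Reachable a c) :
    c = a ∧ d = b := by
  subst hab
  rcases Sym2.eq_iff.1 hcd with ⟨rfl, rfl⟩ | ⟨rfl, rfl⟩
  · exact ⟨rfl, rfl⟩
  · exact absurd hc (hG.not_reachable_deleteEdges h)

end IsAcyclic

theorem eq_or_eq_or_eq_of_adj {v a b c z : W} (hfin : (G.neighborSet v).Finite)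
    (hcard : (G.neighborSet v).ncard ≤ 3) (ha : G.Adj v a) (hb : G.Adj v b) (hc : G.Adj v c)
    (hab : a ≠ b) (hac : a ≠ c) (hbc : b ≠ c) (hz : G.Adj v z) : z = a ∨ z = b ∨ z = c := by
  have hsub : ({a, b, c} : Set W) ⊆ G.neighborSet v := by
    rintro z (rfl | rfl | rfl) <;> assumption
  have heq : ({a, b, c} : Set W) = G.neighborSet v := by
    refine Set.eq_of_subset_of_ncard_le hsub (hcard.trans_eq ?_) hfin
    rw [Set.ncard_insert_of_notMem (by simp [hab, hac]), Set.ncard_pair hbc]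
  have hz' : z ∈ ({a, b, c} : Set W) := heq ▸ hz
  simpa using hz'

theorem eq_mk_of_mem_edgeSet {v a b c : W} (hN : ∀ ⦃z⦄, G.Adj v z → z = a ∨ z = b ∨ z = c)
    {e : Sym2 W} (he : e ∈ G.edgeSet) (hv : v ∈ e) (ha : e ≠ s(v, a)) (hb : e ≠ s(v, b)) :
    e = s(v, c) := by
  rw [← Sym2.other_spec hv] at he ha hb ⊢
  rcases hN (G.mem_edgeSet.1 he) with h | h | h
  exacts [absurd (h ▸ rfl) ha, absurd (h ▸ rfl) hb, h ▸ rfl]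

end SimpleGraph

theorem sideOpp_eq_of_reachable_iff {W : Type*} {G G' : SimpleGraph W} {f f' g g' : Sym2 W}
    (hrel : ∀ a b, (G'.deleteEdges {f'}).Reachable a b ↔ (G.deleteEdges {f}).Reachable a b)
    (hcon : ∀ a ∈ g', ∀ b ∈ g, (G.deleteEdges {f}).Reachable a b) :
    sideOpp G' f' g' = sideOpp G f g := by
  refine congrArg compl (Set.ext fun z => ⟨?_, ?_⟩)
  · rintro ⟨a, ha, r⟩
    exact ⟨g.out.1, g.out_fst_mem, (hcon a ha _ g.out_fst_mem).symm.trans ((hrel a z).1 r)⟩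
  · rintro ⟨b, hb, r⟩
    exact ⟨g'.out.1, g'.out_fst_mem, (hrel _ z).2 ((hcon _ g'.out_fst_mem b hb).trans r)⟩

theorem IsCayley.eq_or_eq_or_eq_of_adj {W : Type*} {G : SimpleGraph W} (hG : IsCayley G)
    {v a b c z : W} (ha : G.Adj v a) (hb : G.Adj v b) (hc : G.Adj v c) (hab : a ≠ b)
    (hac : a ≠ c) (hbc : b ≠ c) (hz : G.Adj v z) : z = a ∨ z = b ∨ z = c :=
  G.eq_or_eq_or_eq_of_adj (Set.finite_of_ncard_ne_zero (by rcases hG.2 v with h | h <;> omega))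
    (by rcases hG.2 v with h | h <;> omega) ha hb hc hab hac hbc hz

namespace BranchData

section Parts

variable {V W : Type*} {G : SimpleGraph W} {x y : Sym2 W} (D : BranchData G x y) (φ : V → W)

theorem part_zero : D.part φ 0 = φ ⁻¹' sideOpp G (D.p 0) y := rfl

theorem part_one : D.part φ 1 = φ ⁻¹' sideOpp G x y := rfl

theorem part_of_two_le {t : ℕ} (h2 : 2 ≤ t) (ht : t ≤ D.i) :
    D.part φ t = φ ⁻¹' sideOpp G (D.fE t) y := by
  rw [part, if_neg (by omega), if_neg (by omega), if_pos ht]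

theorem part_i_add_one : D.part φ (D.i + 1) = φ ⁻¹' sideOpp G y x := by
  rw [part, if_neg (by omega), if_neg (by have := D.hi1; omega), if_neg (by omega), if_pos rfl]

theorem part_i_add_two : D.part φ (D.i + 2) = φ ⁻¹' sideOpp G (D.p (D.i + 1)) y := by
  rw [part, if_neg (by omega), if_neg (by omega), if_neg (by omega), if_neg (by omega)]

end Parts

variable {W : Type*} {G : SimpleGraph W} {x y : Sym2 W} (D : BranchData G x y)

def OffPath (u : W) : Prop := ∀ t ≤ D.i, u ≠ D.vs t

/-- The endpoint of `fE t` other than `vs (t - 1)`; junk `vs 0` unless `2 ≤ t ≤ i`. -/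
noncomputable def fEnd (t : ℕ) : W :=
  if h : 2 ≤ t ∧ t ≤ D.i then Sym2.Mem.other (D.hfE t h.1 h.2).2.1 else D.vs 0

theorem fE_eq {t : ℕ} (h2 : 2 ≤ t) (ht : t ≤ D.i) : D.fE t = s(D.vs (t - 1), D.fEnd t) := by
  rw [fEnd, dif_pos ⟨h2, ht⟩, Sym2.other_spec]

theorem x_eq : x = s(D.vs 0, D.x0) := D.hxe.trans Sym2.eq_swap

theorem p_one_s8 : D.p 1 = s(D.vs 0, D.vs 1) := D.hpe 1 le_rfl D.hi1

theorem adj_vs_pred {t : ℕ} (h1 : 1 ≤ t) (ht : t ≤ D.i) : G.Adj (D.vs (t - 1)) (D.vs t) :=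
  G.mem_edgeSet.1 (D.hpe t h1 ht ▸ D.hpedge t h1 ht)

theorem adj_x0 : G.Adj (D.vs 0) D.x0 := G.mem_edgeSet.1 (D.x_eq ▸ D.hx)

theorem adj_y1 : G.Adj (D.vs D.i) D.y1 := G.mem_edgeSet.1 (D.hye ▸ D.hy)

theorem adj_fv_s8 : G.Adj (D.vs 0) D.fv := G.mem_edgeSet.1 (D.hp0 ▸ D.hp0edge)

theorem adj_gv_s8 : G.Adj (D.vs D.i) D.gv := G.mem_edgeSet.1 (D.hpi1 ▸ D.hpi1edge)

theorem adj_fEnd {t : ℕ} (h2 : 2 ≤ t) (ht : t ≤ D.i) : G.Adj (D.vs (t - 1)) (D.fEnd t) :=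
  G.mem_edgeSet.1 (D.fE_eq h2 ht ▸ (D.hfE t h2 ht).1)

theorem mk_vs_ne_mk_of_offPath {u : W} (hu : D.OffPath u) {a b : ℕ} (ha : a ≤ D.i)
    (hb : b ≤ D.i) (c : ℕ) : s(D.vs a, D.vs b) ≠ s(D.vs c, u) := by
  intro h
  rcases Sym2.eq_iff.1 h with ⟨-, h⟩ | ⟨h, -⟩
  exacts [hu b hb h.symm, hu a ha h.symm]

theorem p_ne_mk_of_offPath {u : W} (hu : D.OffPath u) {r : ℕ} (h1 : 1 ≤ r) (hr : r ≤ D.i)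
    (c : ℕ) : D.p r ≠ s(D.vs c, u) :=
  D.hpe r h1 hr ▸ D.mk_vs_ne_mk_of_offPath hu (by omega) hr c

theorem eq_of_mk_eq_mk_of_offPath {u u' : W} (hu : D.OffPath u') {a b : ℕ} (ha : a ≤ D.i)
    (hb : b ≤ D.i) (h : s(D.vs a, u) = s(D.vs b, u')) : a = b ∧ u = u' := by
  rcases Sym2.eq_iff.1 h with ⟨h1, h2⟩ | ⟨h1, -⟩
  exacts [⟨D.hvsinj a b ha hb h1, h2⟩, absurd h1.symm (hu a ha)]

theorem mk_ne_mk_of_offPath {u u' : W} (hu : D.OffPath u') {a b : ℕ} (ha : a ≤ D.i)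
    (hb : b ≤ D.i) (hab : a ≠ b) : s(D.vs a, u) ≠ s(D.vs b, u') := fun h =>
  hab (D.eq_of_mk_eq_mk_of_offPath hu ha hb h).1

theorem p_ne_p {r s : ℕ} (h1 : 1 ≤ r) (hrs : r < s) (hs : s ≤ D.i) : D.p s ≠ D.p r := by
  rw [D.hpe s (by omega) hs, D.hpe r h1 (by omega)]
  intro h
  rcases Sym2.eq_iff.1 h with ⟨h, -⟩ | ⟨-, h⟩
  · have := D.hvsinj _ _ (by omega) (by omega) h; omega
  · have := D.hvsinj _ _ hs (by omega) h; omega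

theorem reachable_vs {e : Sym2 W} {a b : ℕ} (hab : a ≤ b) (hb : b ≤ D.i)
    (he : ∀ r, a < r → r ≤ b → D.p r ≠ e) : (G.deleteEdges {e}).Reachable (D.vs a) (D.vs b) :=
  reachable_of_forall_adj_pred D.vs hab fun t ht htb =>
    deleteEdges_adj_of_ne (D.adj_vs_pred (by omega) (by omega))
      (D.hpe t (by omega) (by omega) ▸ he t ht htb)

theorem reachable_vs_zero_vs_one {e : Sym2 W} (h : D.p 1 ≠ e) :
    (G.deleteEdges {e}).Reachable (D.vs 0) (D.vs 1) :=
  D.reachable_vs (Nat.zero_le _) D.hi1 fun r hr hr1 => by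
    obtain rfl : r = 1 := by omega
    exact h

theorem reachable_deleteEdges_p {t : ℕ} (h1 : 1 ≤ t) (ht : t ≤ D.i) :
    (G.deleteEdges {D.p t}).Reachable (D.vs t) (D.vs D.i) :=
  D.reachable_vs ht le_rfl fun _ hr hri => D.p_ne_p h1 hr hri

theorem reachable_deleteEdges_x : (G.deleteEdges {x}).Reachable (D.vs 0) (D.vs D.i) :=
  D.reachable_vs (Nat.zero_le _) le_rfl fun _ hr hri h =>
    D.p_ne_mk_of_offPath D.hx0 hr hri 0 (h.trans D.x_eq)

theorem reachable_deleteEdges_y : (G.deleteEdges {y}).Reachable (D.vs 0) (D.vs D.i) :=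
  D.reachable_vs (Nat.zero_le _) le_rfl fun _ hr hri h =>
    D.p_ne_mk_of_offPath D.hy1 hr hri D.i (h.trans D.hye)

theorem vs_zero_mem_x : D.vs 0 ∈ x := (congrArg (D.vs 0 ∈ ·) D.x_eq).mpr (Sym2.mem_mk_left _ _)

theorem vs_last_mem_y : D.vs D.i ∈ y := (congrArg (D.vs D.i ∈ ·) D.hye).mpr (Sym2.mem_mk_left _ _)

include D in
theorem x_ne_y : x ≠ y := fun h =>
  D.hnonadj D.x0 ⟨(congrArg (D.x0 ∈ ·) D.hxe).mpr (Sym2.mem_mk_left _ _),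
    (congrArg (D.x0 ∈ ·) (h.symm.trans D.hxe)).mpr (Sym2.mem_mk_left _ _)⟩

theorem reachable_of_mem_x_of_mem_y {e : Sym2 W} (hx : x ≠ e) (hy : y ≠ e)
    (hp : ∀ r, 1 ≤ r → r ≤ D.i → D.p r ≠ e) : ∀ a ∈ x, ∀ b ∈ y, (G.deleteEdges {e}).Reachable a b :=
  reachable_deleteEdges_of_mem D.hx D.hy hx hy D.vs_zero_mem_x D.vs_last_mem_y
    (D.reachable_vs (Nat.zero_le _) le_rfl fun r h1 hr => hp r h1 hr)

theorem fv_ne_x0 : D.fv ≠ D.x0 := fun h => D.hp0x (by rw [D.hp0, h]; exact D.x_eq.symm)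

theorem gv_ne_y1 : D.gv ≠ D.y1 := fun h => D.hpi1y (by rw [D.hpi1, h]; exact D.hye.symm)

theorem reachable_vs_one_fv {e : Sym2 W} (h1 : D.p 1 ≠ e) (h0 : D.p 0 ≠ e) :
    (G.deleteEdges {e}).Reachable (D.vs 1) D.fv :=
  (deleteEdges_adj_of_ne (D.adj_vs_pred le_rfl D.hi1) (D.p_one_s8 ▸ h1)).reachable.symm.trans
    (deleteEdges_adj_of_ne D.adj_fv_s8 (D.hp0 ▸ h0)).reachable

theorem reachable_vs_zero_gv {e : Sym2 W} (hp : ∀ r, 1 ≤ r → r ≤ D.i → D.p r ≠ e)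
    (hi : D.p (D.i + 1) ≠ e) : (G.deleteEdges {e}).Reachable (D.vs 0) D.gv :=
  (D.reachable_vs (Nat.zero_le _) le_rfl fun r hr hri => hp r hr hri).trans
    (deleteEdges_adj_of_ne D.adj_gv_s8 (D.hpi1 ▸ hi)).reachable

theorem shifted_adj {a b : W} : D.shifted.Adj a b ↔
    (G.Adj a b ∧ s(a, b) ≠ D.p 1 ∧ s(a, b) ≠ D.p 0 ∧ s(a, b) ≠ D.p (D.i + 1)) ∨
      ((s(a, b) = s(D.vs 0, D.vs D.i) ∨ s(a, b) = s(D.vs 1, D.fv) ∨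
        s(a, b) = s(D.vs 0, D.gv)) ∧ a ≠ b) := by
  simp only [shifted, fromEdgeSet_adj, Set.mem_union, Set.mem_sdiff, Set.mem_insert_iff,
    Set.mem_singleton_iff, mem_edgeSet, not_or]
  constructor
  · rintro ⟨⟨hab, h1, h0, hi⟩ | hE, hne⟩
    exacts [.inl ⟨hab, h1, h0, hi⟩, .inr ⟨hE, hne⟩]
  · rintro (⟨hab, h1, h0, hi⟩ | ⟨hE, hne⟩)
    exacts [⟨.inl ⟨hab, h1, h0, hi⟩, hab.ne⟩, ⟨.inr hE, hne⟩]

theorem shifted_adj_of_adj {a b : W} (hab : G.Adj a b) (h1 : s(a, b) ≠ D.p 1)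
    (h0 : s(a, b) ≠ D.p 0) (hi : s(a, b) ≠ D.p (D.i + 1)) : D.shifted.Adj a b :=
  D.shifted_adj.2 (.inl ⟨hab, h1, h0, hi⟩)

theorem shifted_adj_vs_zero_vs_last : D.shifted.Adj (D.vs 0) (D.vs D.i) :=
  D.shifted_adj.2 (.inr ⟨.inl rfl, fun h => by
    have := D.hvsinj _ _ (Nat.zero_le _) le_rfl h; have := D.hi1; omega⟩)

/-- Cutting `e'` from the shifted tree and `e` from `G` leave the same components as soon as each
edge created (resp. removed) by the shift is bypassed in `G` minus `e` (resp. in the shifted tree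
minus `e'`), and the common edges meet `e'` exactly when they meet `e`. -/
theorem reachable_shifted_deleteEdges_iff {e e' : Sym2 W}
    (hkeep : ∀ g ∈ G.edgeSet, g ≠ D.p 1 → g ≠ D.p 0 → g ≠ D.p (D.i + 1) → (g = e' ↔ g = e))
    (hE1 : s(D.vs 0, D.vs D.i) ≠ e' → (G.deleteEdges {e}).Reachable (D.vs 0) (D.vs D.i))
    (hE2 : s(D.vs 1, D.fv) ≠ e' → (G.deleteEdges {e}).Reachable (D.vs 1) D.fv)
    (hE3 : s(D.vs 0, D.gv) ≠ e' → (G.deleteEdges {e}).Reachable (D.vs 0) D.gv)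
    (hp1 : D.p 1 ≠ e → (D.shifted.deleteEdges {e'}).Reachable (D.vs 0) (D.vs 1))
    (hp0 : D.p 0 ≠ e → (D.shifted.deleteEdges {e'}).Reachable (D.vs 0) D.fv)
    (hpi : D.p (D.i + 1) ≠ e → (D.shifted.deleteEdges {e'}).Reachable (D.vs D.i) D.gv)
    (a b : W) :
    (D.shifted.deleteEdges {e'}).Reachable a b ↔ (G.deleteEdges {e}).Reachable a b := by
  refine reachable_iff_of_forall_adj (fun a b hab => ?_) (fun a b hab => ?_) a b
  · obtain ⟨hab, hne : s(a, b) ≠ e'⟩ := deleteEdges_adj.1 hab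
    rcases D.shifted_adj.1 hab with ⟨hab, h1, h0, hi⟩ | ⟨hE | hE | hE, -⟩
    · exact (deleteEdges_adj_of_ne hab ((hkeep _ hab h1 h0 hi).not.1 hne)).reachable
    · exact reachable_of_mk_eq hE (hE1 (hE ▸ hne))
    · exact reachable_of_mk_eq hE (hE2 (hE ▸ hne))
    · exact reachable_of_mk_eq hE (hE3 (hE ▸ hne))
  · obtain ⟨hab, hne : s(a, b) ≠ e⟩ := deleteEdges_adj.1 hab
    by_cases h1 : s(a, b) = D.p 1
    · exact reachable_of_mk_eq (h1.trans D.p_one_s8) (hp1 (h1 ▸ hne))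
    by_cases h0 : s(a, b) = D.p 0
    · exact reachable_of_mk_eq (h0.trans D.hp0) (hp0 (h0 ▸ hne))
    by_cases hi : s(a, b) = D.p (D.i + 1)
    · exact reachable_of_mk_eq (hi.trans D.hpi1) (hpi (hi ▸ hne))
    exact (deleteEdges_adj_of_ne (D.shifted_adj_of_adj hab h1 h0 hi)
      ((hkeep _ hab h1 h0 hi).not.2 hne)).reachable

section Acyclic

variable (hG : G.IsAcyclic)
include hG

theorem offPath_of_adj {a : ℕ} {u : W} (ha : a ≤ D.i) (hu : G.Adj (D.vs a) u)
    (hprev : 1 ≤ a → s(D.vs a, u) ≠ D.p a) (hnext : a < D.i → s(D.vs a, u) ≠ D.p (a + 1)) :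
    D.OffPath u := by
  have hsucc : ∀ b c, b < c → c ≤ D.i → G.Adj (D.vs b) (D.vs c) → c = b + 1 := by
    intro b c hbc hc hadj
    by_contra hne
    refine hG.not_reachable_deleteEdges hadj (D.reachable_vs hbc.le hc fun r hr hrc h => ?_)
    rw [D.hpe r (by omega) (by omega)] at h
    rcases Sym2.eq_iff.1 h with ⟨h1, h2⟩ | ⟨h1, -⟩
    · have := D.hvsinj _ _ (by omega) (by omega) h1
      have := D.hvsinj _ _ (by omega) hc h2
      omega
    · have := D.hvsinj _ _ (by omega) hc h1
      omega
  rintro t ht rfl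
  rcases lt_trichotomy a t with h | rfl | h
  · obtain rfl := hsucc a t h ht hu
    exact hnext (by omega) (by simpa using (D.hpe (a + 1) (by omega) ht).symm)
  · exact hu.ne rfl
  · obtain rfl := hsucc t a h ha hu.symm
    exact hprev (by omega) (by simpa [Sym2.eq_swap] using (D.hpe (t + 1) (by omega) ha).symm)

theorem offPath_fv : D.OffPath D.fv :=
  D.offPath_of_adj hG (Nat.zero_le _) D.adj_fv_s8 (by omega) fun _ => D.hp0 ▸ D.hp0p1

theorem offPath_gv : D.OffPath D.gv :=
  D.offPath_of_adj hG le_rfl D.adj_gv_s8 (fun _ => D.hpi1 ▸ D.hpi1pi) (by omega)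

theorem offPath_fEnd {t : ℕ} (h2 : 2 ≤ t) (ht : t ≤ D.i) : D.OffPath (D.fEnd t) :=
  D.offPath_of_adj hG (by omega) (D.adj_fEnd h2 ht)
    (fun _ => D.fE_eq h2 ht ▸ (D.hfE t h2 ht).2.2.1)
    (fun _ => by simpa [Nat.sub_add_cancel (by omega : 1 ≤ t), D.fE_eq h2 ht] using
      (D.hfE t h2 ht).2.2.2)

theorem eq_of_adj_of_adj_offPath {u : W} (hu : D.OffPath u) {a b : ℕ} (ha : a ≤ D.i)
    (hb : b ≤ D.i) (hau : G.Adj (D.vs a) u) (hbu : G.Adj (D.vs b) u) : a = b := by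
  wlog hab : a < b generalizing a b
  · rcases (not_lt.1 hab).lt_or_eq with h | h
    exacts [(this hb ha hbu hau h).symm, h.symm]
  refine absurd ?_ (hG.not_reachable_deleteEdges hbu)
  exact (D.reachable_vs hab.le hb fun r hr hrb =>
    D.p_ne_mk_of_offPath hu (by omega) (by omega) b).symm.trans
      (deleteEdges_adj_of_ne hau (D.mk_ne_mk_of_offPath hu ha hb hab.ne)).reachable

theorem gv_ne_x0 : D.gv ≠ D.x0 := fun h =>
  absurd (D.eq_of_adj_of_adj_offPath hG D.hx0 le_rfl (Nat.zero_le _) (h ▸ D.adj_gv_s8) D.adj_x0)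
    (by have := D.hi1; omega)

theorem fEnd_ne_fv {t : ℕ} (h2 : 2 ≤ t) (ht : t ≤ D.i) : D.fEnd t ≠ D.fv := fun h => by
  have := D.eq_of_adj_of_adj_offPath hG (D.offPath_fv hG) (by omega) (Nat.zero_le _)
    (h ▸ D.adj_fEnd h2 ht) D.adj_fv_s8
  omega

theorem y1_ne_fv : D.y1 ≠ D.fv := fun h => by
  have := D.eq_of_adj_of_adj_offPath hG (D.offPath_fv hG) le_rfl (Nat.zero_le _)
    (h ▸ D.adj_y1) D.adj_fv_s8
  have := D.hi1
  omega

theorem shifted_adj_vs_one_fv : D.shifted.Adj (D.vs 1) D.fv :=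
  D.shifted_adj.2 (.inr ⟨.inr (.inl rfl), (D.offPath_fv hG 1 D.hi1).symm⟩)

theorem shifted_adj_vs_zero_gv : D.shifted.Adj (D.vs 0) D.gv :=
  D.shifted_adj.2 (.inr ⟨.inr (.inr rfl), (D.offPath_gv hG 0 (Nat.zero_le _)).symm⟩)

theorem shifted_adj_vs_pred {t : ℕ} (h2 : 2 ≤ t) (ht : t ≤ D.i) :
    D.shifted.Adj (D.vs (t - 1)) (D.vs t) := by
  refine D.shifted_adj_of_adj (D.adj_vs_pred (by omega) ht) ?_ ?_ ?_ <;>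
    rw [← D.hpe t (by omega) ht]
  · exact D.p_ne_p le_rfl (by omega) ht
  · exact D.hp0 ▸ D.p_ne_mk_of_offPath (D.offPath_fv hG) (by omega) ht 0
  · exact D.hpi1 ▸ D.p_ne_mk_of_offPath (D.offPath_gv hG) (by omega) ht D.i

theorem shifted_adj_vs {t : ℕ} (ht : t ≤ D.i) {z : W} (hz : D.shifted.Adj (D.vs t) z) :
    (G.Adj (D.vs t) z ∧ s(D.vs t, z) ≠ D.p 1 ∧ s(D.vs t, z) ≠ D.p 0 ∧
        s(D.vs t, z) ≠ D.p (D.i + 1)) ∨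
      (t = 0 ∧ z = D.vs D.i) ∨ (t = D.i ∧ z = D.vs 0) ∨ (t = 1 ∧ z = D.fv) ∨
        (t = 0 ∧ z = D.gv) := by
  rcases D.shifted_adj.1 hz with hkept | ⟨hE | hE | hE, -⟩
  · exact .inl hkept
  · rcases Sym2.eq_iff.1 hE with ⟨h, rfl⟩ | ⟨h, rfl⟩
    · exact .inr (.inl ⟨D.hvsinj _ _ ht (Nat.zero_le _) h, rfl⟩)
    · exact .inr (.inr (.inl ⟨D.hvsinj _ _ ht le_rfl h, rfl⟩))
  · obtain ⟨h, rfl⟩ := D.eq_of_mk_eq_mk_of_offPath (D.offPath_fv hG) ht D.hi1 hE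
    exact .inr (.inr (.inr (.inl ⟨h, rfl⟩)))
  · obtain ⟨h, rfl⟩ := D.eq_of_mk_eq_mk_of_offPath (D.offPath_gv hG) ht (Nat.zero_le _) hE
    exact .inr (.inr (.inr (.inr ⟨h, rfl⟩)))

theorem shifted_reachable_vs_one_vs_last {e : Sym2 W}
    (hp : ∀ r, 2 ≤ r → r ≤ D.i → D.p r ≠ e) :
    (D.shifted.deleteEdges {e}).Reachable (D.vs 1) (D.vs D.i) :=
  reachable_of_forall_adj_pred D.vs D.hi1 fun t ht hti =>
    deleteEdges_adj_of_ne (D.shifted_adj_vs_pred hG ht hti)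
      (D.hpe t (by omega) hti ▸ hp t ht hti)

theorem shifted_reachable_vs_zero_vs_one {e : Sym2 W} (hE1 : s(D.vs 0, D.vs D.i) ≠ e)
    (hp : ∀ r, 2 ≤ r → r ≤ D.i → D.p r ≠ e) :
    (D.shifted.deleteEdges {e}).Reachable (D.vs 0) (D.vs 1) :=
  (deleteEdges_adj_of_ne D.shifted_adj_vs_zero_vs_last hE1).reachable.trans
    (D.shifted_reachable_vs_one_vs_last hG hp).symm

theorem shifted_reachable_vs_zero_fv {e : Sym2 W} (hE1 : s(D.vs 0, D.vs D.i) ≠ e)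
    (hE2 : s(D.vs 1, D.fv) ≠ e) (hp : ∀ r, 2 ≤ r → r ≤ D.i → D.p r ≠ e) :
    (D.shifted.deleteEdges {e}).Reachable (D.vs 0) D.fv :=
  (D.shifted_reachable_vs_zero_vs_one hG hE1 hp).trans
    (deleteEdges_adj_of_ne (D.shifted_adj_vs_one_fv hG) hE2).reachable

theorem shifted_reachable_vs_last_gv {e : Sym2 W} (hE1 : s(D.vs 0, D.vs D.i) ≠ e)
    (hE3 : s(D.vs 0, D.gv) ≠ e) : (D.shifted.deleteEdges {e}).Reachable (D.vs D.i) D.gv :=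
  (deleteEdges_adj_of_ne D.shifted_adj_vs_zero_vs_last hE1).reachable.symm.trans
    (deleteEdges_adj_of_ne (D.shifted_adj_vs_zero_gv hG) hE3).reachable

theorem reachable_shifted_deleteEdges_iff_of_offPath {f : Sym2 W} {a : ℕ} {u : W}
    (hf : f = s(D.vs a, u)) (ha : a ≤ D.i) (hu : D.OffPath u) (hfv : a ≤ 1 → u ≠ D.fv)
    (hgv : a = 0 ∨ a = D.i → u ≠ D.gv) (b c : W) :
    (D.shifted.deleteEdges {f}).Reachable b c ↔ (G.deleteEdges {f}).Reachable b c := by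
  subst hf
  have hp r (h1 : 1 ≤ r) (hr : r ≤ D.i) : D.p r ≠ s(D.vs a, u) :=
    D.p_ne_mk_of_offPath hu h1 hr a
  have hE1 : s(D.vs 0, D.vs D.i) ≠ s(D.vs a, u) :=
    D.mk_vs_ne_mk_of_offPath hu (Nat.zero_le _) le_rfl a
  have hE2 : s(D.vs 1, D.fv) ≠ s(D.vs a, u) := fun h => by
    obtain ⟨rfl, rfl⟩ := D.eq_of_mk_eq_mk_of_offPath hu D.hi1 ha h
    exact hfv le_rfl rfl
  have hE3 : s(D.vs 0, D.gv) ≠ s(D.vs a, u) := fun h => by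
    obtain ⟨rfl, rfl⟩ := D.eq_of_mk_eq_mk_of_offPath hu (Nat.zero_le _) ha h
    exact hgv (.inl rfl) rfl
  have hp0 : D.p 0 ≠ s(D.vs a, u) := fun h => by
    obtain ⟨rfl, rfl⟩ := D.eq_of_mk_eq_mk_of_offPath hu (Nat.zero_le _) ha (D.hp0 ▸ h)
    exact hfv (Nat.zero_le _) rfl
  have hpi : D.p (D.i + 1) ≠ s(D.vs a, u) := fun h => by
    obtain ⟨rfl, rfl⟩ := D.eq_of_mk_eq_mk_of_offPath hu le_rfl ha (D.hpi1 ▸ h)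
    exact hgv (.inr rfl) rfl
  have hp2 r (h2 : 2 ≤ r) (hr : r ≤ D.i) := hp r (by omega) hr
  exact D.reachable_shifted_deleteEdges_iff (fun _ _ _ _ _ => Iff.rfl)
    (fun _ => D.reachable_vs (Nat.zero_le _) le_rfl fun r hr hri => hp r hr hri)
    (fun _ => D.reachable_vs_one_fv (hp 1 le_rfl D.hi1) hp0)
    (fun _ => D.reachable_vs_zero_gv hp hpi)
    (fun _ => D.shifted_reachable_vs_zero_vs_one hG hE1 hp2)
    (fun _ => D.shifted_reachable_vs_zero_fv hG hE1 hE2 hp2)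
    (fun _ => D.shifted_reachable_vs_last_gv hG hE1 hE3) b c

theorem reachable_shifted_deleteEdges_x_iff (b c : W) :
    (D.shifted.deleteEdges {x}).Reachable b c ↔ (G.deleteEdges {x}).Reachable b c :=
  D.reachable_shifted_deleteEdges_iff_of_offPath hG D.x_eq (Nat.zero_le _) D.hx0
    (fun _ => D.fv_ne_x0.symm) (fun _ => (D.gv_ne_x0 hG).symm) b c

theorem reachable_shifted_deleteEdges_y_iff (b c : W) :
    (D.shifted.deleteEdges {y}).Reachable b c ↔ (G.deleteEdges {y}).Reachable b c :=
  D.reachable_shifted_deleteEdges_iff_of_offPath hG D.hye le_rfl D.hy1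
    (fun _ => D.y1_ne_fv hG) (fun _ => D.gv_ne_y1.symm) b c

theorem reachable_shifted_deleteEdges_fE_iff {t : ℕ} (h2 : 2 ≤ t) (ht : t ≤ D.i) (b c : W) :
    (D.shifted.deleteEdges {D.fE t}).Reachable b c ↔ (G.deleteEdges {D.fE t}).Reachable b c :=
  D.reachable_shifted_deleteEdges_iff_of_offPath hG (D.fE_eq h2 ht) (by omega)
    (D.offPath_fEnd hG h2 ht) (fun _ => D.fEnd_ne_fv hG h2 ht) (by omega) b c

theorem not_reachable_shifted_deleteEdges_of_offPath {a : ℕ} {u : W} (ha : a ≤ D.i)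
    (hu : D.OffPath u) (hadj : G.Adj (D.vs a) u) (hfv : a ≤ 1 → u ≠ D.fv)
    (hgv : a = 0 ∨ a = D.i → u ≠ D.gv) :
    ¬ (D.shifted.deleteEdges {s(D.vs a, u)}).Reachable u (D.vs 0) := fun h =>
  hG.not_reachable_deleteEdges hadj <|
    (D.reachable_vs (Nat.zero_le _) ha fun r h1 hr => D.p_ne_mk_of_offPath hu h1 (by omega) a).symm
      |>.trans ((D.reachable_shifted_deleteEdges_iff_of_offPath hG rfl ha hu hfv hgv _ _).1 h).symm

theorem reachable_shifted_deleteEdges_fv_iff (b c : W) :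
    (D.shifted.deleteEdges {s(D.vs 1, D.fv)}).Reachable b c ↔
      (G.deleteEdges {D.p 0}).Reachable b c := by
  have hfv := D.offPath_fv hG
  have hE2 : s(D.vs 1, D.fv) ∉ G.edgeSet := fun h =>
    one_ne_zero (D.eq_of_adj_of_adj_offPath hG hfv D.hi1 (Nat.zero_le _) h D.adj_fv_s8)
  have hp r (h1 : 1 ≤ r) (hr : r ≤ D.i) : D.p r ≠ D.p 0 :=
    D.hp0 ▸ D.p_ne_mk_of_offPath hfv h1 hr 0
  have hpi : D.p (D.i + 1) ≠ D.p 0 := by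
    rw [D.hpi1, D.hp0]
    exact D.mk_ne_mk_of_offPath hfv le_rfl (Nat.zero_le _) (Nat.one_le_iff_ne_zero.1 D.hi1)
  have hE1 : s(D.vs 0, D.vs D.i) ≠ s(D.vs 1, D.fv) :=
    D.mk_vs_ne_mk_of_offPath hfv (Nat.zero_le _) le_rfl 1
  have hE3 : s(D.vs 0, D.gv) ≠ s(D.vs 1, D.fv) :=
    D.mk_ne_mk_of_offPath hfv (Nat.zero_le _) D.hi1 zero_ne_one
  exact D.reachable_shifted_deleteEdges_iff
    (fun g hg _ h0 _ => iff_of_false (fun h => hE2 (by rwa [h] at hg)) h0)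
    (fun _ => D.reachable_vs (Nat.zero_le _) le_rfl fun r hr hri => hp r (by omega) hri)
    (fun h => absurd rfl h) (fun _ => D.reachable_vs_zero_gv hp hpi)
    (fun _ => D.shifted_reachable_vs_zero_vs_one hG hE1 fun r h2 hr =>
      D.p_ne_mk_of_offPath hfv (by omega) hr 1)
    (fun h => absurd rfl h) (fun _ => D.shifted_reachable_vs_last_gv hG hE1 hE3) b c

theorem not_reachable_shifted_deleteEdges_fv :
    ¬ (D.shifted.deleteEdges {s(D.vs 1, D.fv)}).Reachable D.fv (D.vs 0) := fun h =>
  hG.not_reachable_deleteEdges D.adj_fv_s8 <|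
    D.hp0 ▸ ((D.reachable_shifted_deleteEdges_fv_iff hG _ _).1 h).symm

theorem reachable_shifted_deleteEdges_gv_iff (b c : W) :
    (D.shifted.deleteEdges {s(D.vs 0, D.gv)}).Reachable b c ↔
      (G.deleteEdges {D.p (D.i + 1)}).Reachable b c := by
  have hgv := D.offPath_gv hG
  have hE3 : s(D.vs 0, D.gv) ∉ G.edgeSet := fun h => by
    have := D.eq_of_adj_of_adj_offPath hG hgv (Nat.zero_le _) le_rfl h D.adj_gv_s8
    have := D.hi1
    omega
  have hp r (h1 : 1 ≤ r) (hr : r ≤ D.i) : D.p r ≠ D.p (D.i + 1) :=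
    D.hpi1 ▸ D.p_ne_mk_of_offPath hgv h1 hr D.i
  have hp0 : D.p 0 ≠ D.p (D.i + 1) := by
    rw [D.hp0, D.hpi1]
    exact D.mk_ne_mk_of_offPath hgv (Nat.zero_le _) le_rfl (Nat.one_le_iff_ne_zero.1 D.hi1).symm
  have hE1 : s(D.vs 0, D.vs D.i) ≠ s(D.vs 0, D.gv) :=
    D.mk_vs_ne_mk_of_offPath hgv (Nat.zero_le _) le_rfl 0
  have hE2 : s(D.vs 1, D.fv) ≠ s(D.vs 0, D.gv) :=
    D.mk_ne_mk_of_offPath hgv D.hi1 (Nat.zero_le _) one_ne_zero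
  have hp2 r (h2 : 2 ≤ r) (hr : r ≤ D.i) : D.p r ≠ s(D.vs 0, D.gv) :=
    D.p_ne_mk_of_offPath hgv (by omega) hr 0
  exact D.reachable_shifted_deleteEdges_iff
    (fun g hg _ _ hi => iff_of_false (fun h => hE3 (by rwa [h] at hg)) hi)
    (fun _ => D.reachable_vs (Nat.zero_le _) le_rfl fun r hr hri => hp r (by omega) hri)
    (fun _ => D.reachable_vs_one_fv (hp 1 le_rfl D.hi1) hp0) (fun h => absurd rfl h)
    (fun _ => D.shifted_reachable_vs_zero_vs_one hG hE1 hp2)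
    (fun _ => D.shifted_reachable_vs_zero_fv hG hE1 hE2 hp2) (fun h => absurd rfl h) b c

theorem sideOpp_shifted_fv : sideOpp D.shifted s(D.vs 1, D.fv) x = sideOpp G (D.p 0) y := by
  have hfv := D.offPath_fv hG
  refine sideOpp_eq_of_reachable_iff (D.reachable_shifted_deleteEdges_fv_iff hG)
    (D.reachable_of_mem_x_of_mem_y D.hp0x.symm (fun h => ?_) fun r h1 hr =>
      D.hp0 ▸ D.p_ne_mk_of_offPath hfv h1 hr 0)
  exact D.mk_ne_mk_of_offPath hfv le_rfl (Nat.zero_le _) (Nat.one_le_iff_ne_zero.1 D.hi1)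
    (D.hye.symm.trans (h.trans D.hp0))

theorem sideOpp_shifted_fE {t : ℕ} (h2 : 2 ≤ t) (ht : t ≤ D.i) :
    sideOpp D.shifted (D.fE t) x = sideOpp G (D.fE t) y := by
  have hw := D.offPath_fEnd hG h2 ht
  refine sideOpp_eq_of_reachable_iff (D.reachable_shifted_deleteEdges_fE_iff hG h2 ht)
    (D.reachable_of_mem_x_of_mem_y (fun h => ?_) (fun h => ?_) fun r h1 hr =>
      D.fE_eq h2 ht ▸ D.p_ne_mk_of_offPath hw h1 hr (t - 1))
  · exact D.mk_ne_mk_of_offPath hw (Nat.zero_le _) (by omega) (by omega)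
      (D.x_eq.symm.trans (h.trans (D.fE_eq h2 ht)))
  · exact D.mk_ne_mk_of_offPath hw le_rfl (by omega) (by omega)
      (D.hye.symm.trans (h.trans (D.fE_eq h2 ht)))

theorem sideOpp_shifted_y : sideOpp D.shifted y x = sideOpp G y x :=
  sideOpp_eq_of_reachable_iff (D.reachable_shifted_deleteEdges_y_iff hG)
    (reachable_deleteEdges_of_mem D.hx D.hx D.x_ne_y D.x_ne_y D.vs_zero_mem_x D.vs_zero_mem_x .rfl)

theorem sideOpp_shifted_x (hi : 2 ≤ D.i) : sideOpp D.shifted x (D.fE 2) = sideOpp G x y := by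
  obtain ⟨hfE, hmem, -⟩ := D.hfE 2 le_rfl hi
  refine sideOpp_eq_of_reachable_iff (D.reachable_shifted_deleteEdges_x_iff hG)
    (reachable_deleteEdges_of_mem hfE D.hy (fun h => ?_) D.x_ne_y.symm hmem D.vs_last_mem_y
      (D.reachable_vs D.hi1 le_rfl fun r hr hri h =>
        D.p_ne_mk_of_offPath D.hx0 (by omega) hri 0 (h.trans D.x_eq)))
  exact D.mk_ne_mk_of_offPath D.hx0 (by omega) (Nat.zero_le _) one_ne_zero
    ((D.fE_eq le_rfl hi).symm.trans (h.trans D.x_eq))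

theorem sideOpp_shifted_gv :
    sideOpp D.shifted s(D.vs 0, D.gv) x = sideOpp G (D.p (D.i + 1)) y := by
  have hgv := D.offPath_gv hG
  refine sideOpp_eq_of_reachable_iff (D.reachable_shifted_deleteEdges_gv_iff hG)
    (D.reachable_of_mem_x_of_mem_y (fun h => ?_) D.hpi1y.symm fun r h1 hr =>
      D.hpi1 ▸ D.p_ne_mk_of_offPath hgv h1 hr D.i)
  exact D.mk_ne_mk_of_offPath hgv (Nat.zero_le _) le_rfl (Nat.one_le_iff_ne_zero.1 D.hi1).symm
    (D.x_eq.symm.trans (h.trans D.hpi1))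

end Acyclic

section Cayley

variable (hC : IsCayley G)
include hC

theorem eq_of_adj_vs_zero {z : W} (hz : G.Adj (D.vs 0) z) : z = D.x0 ∨ z = D.vs 1 ∨ z = D.fv :=
  hC.eq_or_eq_or_eq_of_adj D.adj_x0 (D.adj_vs_pred le_rfl D.hi1) D.adj_fv_s8 (D.hx0 1 D.hi1)
    D.fv_ne_x0.symm (D.offPath_fv hC.1.isAcyclic 1 D.hi1).symm hz

theorem eq_of_adj_vs {t : ℕ} (h1 : 1 ≤ t) (ht : t < D.i) {z : W} (hz : G.Adj (D.vs t) z) :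
    z = D.vs (t - 1) ∨ z = D.vs (t + 1) ∨ z = D.fEnd (t + 1) := by
  have hfEnd := D.offPath_fEnd hC.1.isAcyclic (t := t + 1) (by omega) ht
  refine hC.eq_or_eq_or_eq_of_adj (D.adj_vs_pred h1 ht.le).symm
    (by simpa using D.adj_vs_pred (t := t + 1) (by omega) ht)
    (by simpa using D.adj_fEnd (t := t + 1) (by omega) ht) (fun h => ?_)
    (hfEnd (t - 1) (by omega)).symm (hfEnd (t + 1) ht).symm hz
  have := D.hvsinj _ _ (by omega) ht h
  omega

theorem eq_of_adj_vs_last {z : W} (hz : G.Adj (D.vs D.i) z) :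
    z = D.vs (D.i - 1) ∨ z = D.y1 ∨ z = D.gv :=
  hC.eq_or_eq_or_eq_of_adj (D.adj_vs_pred D.hi1 le_rfl).symm D.adj_y1 D.adj_gv_s8
    (D.hy1 _ (by omega)).symm (D.offPath_gv hC.1.isAcyclic _ (by omega)).symm D.gv_ne_y1.symm hz

theorem eq_of_shifted_adj_vs_zero ⦃z : W⦄ (hz : D.shifted.Adj (D.vs 0) z) :
    z = D.x0 ∨ z = D.vs D.i ∨ z = D.gv := by
  have := D.hi1
  rcases D.shifted_adj_vs hC.1.isAcyclic (Nat.zero_le _) hz with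
    ⟨hadj, h1, h0, -⟩ | ⟨-, rfl⟩ | ⟨h, -⟩ | ⟨h, -⟩ | ⟨-, rfl⟩
  · rcases D.eq_of_adj_vs_zero hC hadj with rfl | rfl | rfl
    exacts [.inl rfl, absurd D.p_one_s8.symm h1, absurd D.hp0.symm h0]
  · exact .inr (.inl rfl)
  · omega
  · omega
  · exact .inr (.inr rfl)

theorem eq_of_shifted_adj_vs_one (hi : 2 ≤ D.i) ⦃z : W⦄ (hz : D.shifted.Adj (D.vs 1) z) :
    z = D.vs 2 ∨ z = D.fEnd 2 ∨ z = D.fv := by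
  rcases D.shifted_adj_vs hC.1.isAcyclic D.hi1 hz with
    ⟨hadj, h1, -⟩ | ⟨h, -⟩ | ⟨h, -⟩ | ⟨-, rfl⟩ | ⟨h, -⟩
  · rcases D.eq_of_adj_vs hC le_rfl (by omega) hadj with rfl | rfl | rfl
    exacts [absurd (Sym2.eq_swap.trans D.p_one_s8.symm) h1, .inl rfl, .inr (.inl rfl)]
  · omega
  · omega
  · exact .inr (.inr rfl)
  · omega

theorem eq_of_shifted_adj_vs {t : ℕ} (h2 : 2 ≤ t) (ht : t < D.i) ⦃z : W⦄
    (hz : D.shifted.Adj (D.vs t) z) :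
    z = D.vs (t - 1) ∨ z = D.vs (t + 1) ∨ z = D.fEnd (t + 1) := by
  rcases D.shifted_adj_vs hC.1.isAcyclic ht.le hz with ⟨hadj, -⟩ | ⟨h, -⟩ | ⟨h, -⟩ | ⟨h, -⟩ | ⟨h, -⟩
  · exact D.eq_of_adj_vs hC (by omega) ht hadj
  all_goals omega

theorem eq_of_shifted_adj_vs_last (hi : 2 ≤ D.i) ⦃z : W⦄ (hz : D.shifted.Adj (D.vs D.i) z) :
    z = D.vs (D.i - 1) ∨ z = D.y1 ∨ z = D.vs 0 := by
  rcases D.shifted_adj_vs hC.1.isAcyclic le_rfl hz with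
    ⟨hadj, -, -, hpi⟩ | ⟨h, -⟩ | ⟨-, rfl⟩ | ⟨h, -⟩ | ⟨h, -⟩
  · rcases D.eq_of_adj_vs_last hC hadj with rfl | rfl | rfl
    exacts [.inl rfl, .inr (.inl rfl), absurd D.hpi1.symm hpi]
  · omega
  · exact .inr (.inr rfl)
  · omega
  · omega

section ShiftedBranchData

variable (hi : 2 ≤ D.i) (D' : BranchData D.shifted (D.fE 2) x)
include hi

theorem shifted_vs_zero : D'.vs 0 = D.vs 1 ∧ D'.x0 = D.fEnd 2 := by
  have hG := hC.1.isAcyclic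
  have hfE := D.fE_eq le_rfl hi
  have hw := D.offPath_fEnd hG le_rfl hi
  have hx : x ≠ D.fE 2 := fun h =>
    D.mk_ne_mk_of_offPath hw (Nat.zero_le _) D.hi1 zero_ne_one (D.x_eq.symm.trans (h.trans hfE))
  have hreach : (G.deleteEdges {D.fE 2}).Reachable (D.vs 1) (D'.vs 0) :=
    (D.reachable_vs_zero_vs_one (hfE ▸ D.p_ne_mk_of_offPath hw le_rfl D.hi1 1)).symm.trans <|
      (reachable_deleteEdges_of_mem D.hx D.hx hx hx D.vs_zero_mem_x D.vs_zero_mem_x .rfl _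
        D.vs_zero_mem_x _ D'.vs_last_mem_y).trans
      ((D.reachable_shifted_deleteEdges_fE_iff hG le_rfl hi _ _).1 D'.reachable_deleteEdges_x).symm
  exact hG.eq_of_reachable_deleteEdges (D.adj_fEnd le_rfl hi) hfE
    (D'.hxe.trans Sym2.eq_swap) hreach

theorem shifted_vs_last : D'.vs D'.i = D.vs 0 ∧ D'.y1 = D.x0 := by
  have hG := hC.1.isAcyclic
  have hreach : (G.deleteEdges {x}).Reachable (D.vs 0) (D'.vs D'.i) := by
    refine (D.reachable_vs_zero_vs_one fun h =>
      D.p_ne_mk_of_offPath D.hx0 le_rfl D.hi1 0 (h.trans D.x_eq)).trans ?_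
    rw [← (D.shifted_vs_zero hC hi D').1]
    exact (D.reachable_shifted_deleteEdges_x_iff hG _ _).1 D'.reachable_deleteEdges_y
  exact hG.eq_of_reachable_deleteEdges D.adj_x0 D.x_eq D'.hye hreach

theorem reachable_shifted_deleteEdges_vs {t : ℕ} (h1 : 1 ≤ t) (htm : t ≤ D'.i)
    (hprev : D'.vs (t - 1) = D.vs t) :
    (D.shifted.deleteEdges {s(D.vs t, D'.vs t)}).Reachable (D'.vs t) (D.vs 0) := by
  rw [← hprev, ← D'.hpe t h1 htm, ← (D.shifted_vs_last hC hi D').1]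
  exact D'.reachable_deleteEdges_p h1 htm

theorem shifted_vs_succ {t : ℕ} (ht : t < D.i) (htm : t ≤ D'.i) : D'.vs t = D.vs (t + 1) := by
  have hG := hC.1.isAcyclic
  induction t using Nat.strong_induction_on with
  | _ t ih =>
  rcases Nat.eq_zero_or_pos t with rfl | h1
  · exact (D.shifted_vs_zero hC hi D').1
  have hprev : D'.vs (t - 1) = D.vs t := by
    simpa [Nat.sub_add_cancel h1] using ih (t - 1) (by omega) (by omega) (by omega)
  have hadj : D.shifted.Adj (D.vs t) (D'.vs t) := hprev ▸ D'.adj_vs_pred h1 htm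
  have htail := D.reachable_shifted_deleteEdges_vs hC hi D' h1 htm hprev
  -- A wrong turn at `vs t` either revisits the path or crosses an edge of `C'` that still
  -- separates its far end from `vs 0`, where the path of `D'` ends.
  rcases Nat.lt_or_ge t 2 with h2 | h2
  · obtain rfl : t = 1 := by omega
    rcases D.eq_of_shifted_adj_vs_one hC hi hadj with h | h | h
    · exact h
    · exact absurd (h.trans (D.shifted_vs_zero hC hi D').2.symm) (D'.hx0 1 htm).symm
    · rw [h] at htail
      exact absurd htail (D.not_reachable_shifted_deleteEdges_fv hG)
  · rcases D.eq_of_shifted_adj_vs hC h2 ht hadj with h | h | h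
    · have h' := ih (t - 2) (by omega) (by omega) (by omega)
      rw [show t - 2 + 1 = t - 1 by omega, ← h] at h'
      have := D'.hvsinj _ _ (by omega) htm h'
      omega
    · exact h
    · rw [h] at htail
      exact absurd htail (D.not_reachable_shifted_deleteEdges_of_offPath hG (by omega)
        (D.offPath_fEnd hG (by omega) (by omega))
        (by simpa using D.adj_fEnd (t := t + 1) (by omega) (by omega))
        (fun _ => D.fEnd_ne_fv hG (by omega) (by omega)) (by omega))

theorem shifted_i : D'.i = D.i := by
  have hG := hC.1.isAcyclic
  have hlast := (D.shifted_vs_last hC hi D').1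
  refine le_antisymm (not_lt.1 fun hlt => ?_) (not_lt.1 fun hlt => ?_)
  · have hprev : D'.vs (D.i - 1) = D.vs D.i := by
      simpa [Nat.sub_add_cancel D.hi1] using
        D.shifted_vs_succ hC hi D' (t := D.i - 1) (by omega) (by omega)
    have hadj : D.shifted.Adj (D.vs D.i) (D'.vs D.i) :=
      hprev ▸ D'.adj_vs_pred (t := D.i) (by omega) hlt.le
    rcases D.eq_of_shifted_adj_vs_last hC hi hadj with h | h | h
    · have h' := D.shifted_vs_succ hC hi D' (t := D.i - 2) (by omega) (by omega)
      rw [show D.i - 2 + 1 = D.i - 1 by omega, ← h] at h'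
      have := D'.hvsinj _ _ (by omega) hlt.le h'
      omega
    · have htail := D.reachable_shifted_deleteEdges_vs hC hi D' D.hi1 hlt.le hprev
      rw [h] at htail
      exact D.not_reachable_shifted_deleteEdges_of_offPath hG le_rfl D.hy1 D.adj_y1
        (fun _ => D.y1_ne_fv hG) (fun _ => D.gv_ne_y1.symm) htail
    · have := D'.hvsinj _ _ hlt.le le_rfl (h.trans hlast.symm)
      omega
  · have h := D.shifted_vs_succ hC hi D' hlt le_rfl
    rw [hlast] at h
    have := D.hvsinj _ _ (Nat.zero_le _) (by omega) h
    omega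

theorem shifted_vs_pred {t : ℕ} (h1 : 1 ≤ t) (ht : t ≤ D.i) : D'.vs (t - 1) = D.vs t := by
  simpa [Nat.sub_add_cancel h1] using
    D.shifted_vs_succ hC hi D' (t := t - 1) (by omega) (by rw [D.shifted_i hC hi D']; omega)

theorem shifted_p_zero : D'.p 0 = s(D.vs 1, D.fv) := by
  have h0 := (D.shifted_vs_zero hC hi D').1
  refine eq_mk_of_mem_edgeSet (D.eq_of_shifted_adj_vs_one hC hi) D'.hp0edge
    (h0 ▸ D'.hp0 ▸ Sym2.mem_mk_left _ _) (fun h => D'.hp0p1 (h.trans ?_))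
    (fun h => D'.hp0x (h.trans (D.fE_eq le_rfl hi).symm))
  rw [D'.p_one_s8, h0, D.shifted_vs_succ hC hi D' (t := 1) (by omega) D'.hi1]

theorem shifted_fE {t : ℕ} (h2 : 2 ≤ t) (ht : t < D.i) : D'.fE t = D.fE (t + 1) := by
  have htm : t ≤ D'.i := D.shifted_i hC hi D' ▸ ht.le
  obtain ⟨hedge, hmem, hne1, hne2⟩ := D'.hfE t h2 htm
  have hv := D.shifted_vs_pred hC hi D' (t := t) (by omega) ht.le
  rw [D.fE_eq (t := t + 1) (by omega) ht, Nat.add_sub_cancel]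
  refine eq_mk_of_mem_edgeSet (D.eq_of_shifted_adj_vs hC h2 ht) hedge (hv ▸ hmem)
    (fun h => hne1 ?_) (fun h => hne2 ?_)
  · rw [h, D'.hpe (t - 1) (by omega) (by omega),
      D.shifted_vs_pred hC hi D' (t := t - 1) (by omega) (by omega), hv, Sym2.eq_swap]
  · rw [h, D'.hpe t (by omega) htm, hv, D.shifted_vs_succ hC hi D' ht htm]

theorem shifted_fE_last : D'.fE D.i = y := by
  have him := D.shifted_i hC hi D'
  obtain ⟨hedge, hmem, hne1, hne2⟩ := D'.hfE D.i hi (him ▸ le_rfl)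
  have hv := D.shifted_vs_pred hC hi D' D.hi1 le_rfl
  refine (eq_mk_of_mem_edgeSet (fun _ hz => (D.eq_of_shifted_adj_vs_last hC hi hz).imp_right
    Or.symm) hedge (hv ▸ hmem) (fun h => hne1 ?_) (fun h => hne2 ?_)).trans D.hye.symm
  · rw [h, D'.hpe (D.i - 1) (by omega) (by omega),
      D.shifted_vs_pred hC hi D' (t := D.i - 1) (by omega) (by omega), hv, Sym2.eq_swap]
  · rw [h, D'.hpe D.i (by omega) (him ▸ le_rfl), hv, ← him, (D.shifted_vs_last hC hi D').1]

theorem shifted_p_last : D'.p (D'.i + 1) = s(D.vs 0, D.gv) := by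
  have hlast := (D.shifted_vs_last hC hi D').1
  refine eq_mk_of_mem_edgeSet (D.eq_of_shifted_adj_vs_zero hC) D'.hpi1edge
    (hlast ▸ D'.hpi1 ▸ Sym2.mem_mk_left _ _) (fun h => D'.hpi1y (h.trans D.x_eq.symm))
    (fun h => D'.hpi1pi (h.trans ?_))
  rw [D'.hpe D'.i D'.hi1 le_rfl, hlast, D.shifted_i hC hi D',
    D.shifted_vs_pred hC hi D' D.hi1 le_rfl, Sym2.eq_swap]

end ShiftedBranchData

end Cayley

end BranchData

theorem branch_shift_ordering_general {V W : Type*}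
    (C : SimpleGraph W) (φ : V → W) (htp : IsTreePosition C φ)
    (x y : Sym2 W) (d : BranchData C x y) (hi2 : 2 ≤ d.i) :
    ∀ d' : BranchData d.shifted (d.fE 2) x,
      ∀ j, j ≤ d.i + 2 →
        d'.part φ j =
          d.part φ (if j = d.i + 1 then 1 else if 1 ≤ j ∧ j ≤ d.i then j + 1 else j) := by
  intro d' j hj
  have hC := htp.1
  have hG := hC.1.isAcyclic
  have him := d.shifted_i hC hi2 d'
  rcases (by omega : j = 0 ∨ j = 1 ∨ (2 ≤ j ∧ j < d.i) ∨ j = d.i ∨ j = d.i + 1 ∨ j = d.i + 2)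
    with rfl | rfl | ⟨h2, hji⟩ | rfl | rfl | rfl
  · rw [if_neg (by omega), if_neg (by omega), d'.part_zero, d.part_zero,
      d.shifted_p_zero hC hi2 d', d.sideOpp_shifted_fv hG]
  · rw [if_neg (by omega), if_pos ⟨le_rfl, by omega⟩, d'.part_one, d.part_of_two_le φ le_rfl hi2,
      d.sideOpp_shifted_fE hG le_rfl hi2]
  · rw [if_neg (by omega), if_pos ⟨by omega, hji.le⟩, d'.part_of_two_le φ h2 (by omega),
      d.part_of_two_le φ (by omega) hji, d.shifted_fE hC hi2 d' h2 hji,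
      d.sideOpp_shifted_fE hG (by omega) hji]
  · rw [if_neg (by omega), if_pos ⟨d.hi1, le_rfl⟩, d'.part_of_two_le φ hi2 (by omega),
      d.part_i_add_one, d.shifted_fE_last hC hi2 d', d.sideOpp_shifted_y hG]
  · rw [if_pos rfl, ← him, d'.part_i_add_one, d.part_one, d.sideOpp_shifted_x hG hi2]
  · rw [if_neg (by omega), if_neg (by omega), ← him, d'.part_i_add_two,
      d.shifted_p_last hC hi2 d', him, d.part_i_add_two, d.sideOpp_shifted_gv hG]

/-- With `(C',φ)` the branch shift of `x` to `y` applied to `(C,φ)` and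
`Q' = Q` the common branch shift quotient graph, the identity-map TILO ordering on `Q`
defined by `(C',φ)` is the result of cyclically shifting the vertex at position `1` of the
identity-map TILO ordering defined by `(C,φ)` to position `i+1`: the ordering
`(u_0, u_1, …, u_{i+2})` is replaced by `(u_0, u_2, u_3, …, u_i, u_{i+1}, u_1, u_{i+2})`,
i.e. the part at position `j` of the new ordering is the part at position `σ j` of the old
one, where `σ (i+1) = 1`, `σ j = j + 1` for `1 ≤ j ≤ i`, and `σ j = j` otherwise. -/
theorem branch_shift_ordering {V W : Type*} [Fintype V] [Fintype W]
    (w : V → V → ℝ) (hsymm : ∀ u v, w u v = w v u) (hnn : ∀ u v, 0 ≤ w u v)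
    (hdiag : ∀ v, w v v = 0)
    (C : SimpleGraph W) (φ : V → W) (htp : IsTreePosition C φ)
    (x y : Sym2 W) (d : BranchData C x y) (hi2 : 2 ≤ d.i) :
    ∀ d' : BranchData d.shifted (d.fE 2) x,
      ∀ j, j ≤ d.i + 2 →
        d'.part φ j =
          d.part φ (if j = d.i + 1 then 1 else if 1 ≤ j ∧ j ≤ d.i then j + 1 else j) :=
  branch_shift_ordering_general C φ htp x y d hi2
end
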